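/- Let λ_1, …, λ_{n-1} be real constants with Σ λ_i ≠ 0, and set R(y) = −(1/3) Σ_{i=1}^{n-1} λ_i/(1 − λ_i y). If α is a solution of α''/(1+α'²) = R(α) with α(0) = α'(0) = 0, then 1 + α'(x)² = ∏_{i=1}^{n-1} (1 − λ_i α(x))^{2/3} for all x in a neighborhood of 0 where the solution exists and all 1 − λ_i α > 0. -/

import Mathlib

/-!
Write `Φ(y) = (2/3) Σᵢ log (1 - λᵢ y)`, so that `Φ' = 2R`. Along a solution, multiplying the
equation `α''/(1 + α'²) = R(α)` by `2α'` gives `(log (1 + α'²))' = 2 R(α) α' = (Φ ∘ α)'`,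
hence `log (1 + α'²) - Φ(α)` is constant on the convex domain; the initial conditions make
the constant `0`, and exponentiating gives `1 + α'² = exp Φ(α) = ∏ᵢ (1 - λᵢ α)^{2/3}`.
-/

open Real

theorem Convex.eq_of_hasDerivAt_eq_zero {s : Set ℝ} (hs : Convex ℝ s) {g : ℝ → ℝ}
    (hg : ∀ x ∈ s, HasDerivAt g 0 x) {x y : ℝ} (hx : x ∈ s) (hy : y ∈ s) : g y = g x := by
  have h := hs.norm_image_sub_le_of_norm_hasDerivWithin_le (C := 0)
    (fun z hz => (hg z hz).hasDerivWithinAt) (fun _ _ => by simp) hx hy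
  rw [zero_mul, norm_le_zero_iff, sub_eq_zero] at h
  exact h

theorem log_one_add_sq_sub_eq_of_ode {s : Set ℝ} (hs : Convex ℝ s) {R Φ α α' α'' : ℝ → ℝ}
    (hd1 : ∀ x ∈ s, HasDerivAt α (α' x) x) (hd2 : ∀ x ∈ s, HasDerivAt α' (α'' x) x)
    (hode : ∀ x ∈ s, α'' x / (1 + α' x ^ 2) = R (α x))
    (hΦ : ∀ x ∈ s, HasDerivAt Φ (2 * R (α x)) (α x)) {x y : ℝ} (hx : x ∈ s) (hy : y ∈ s) :
    log (1 + α' y ^ 2) - Φ (α y) = log (1 + α' x ^ 2) - Φ (α x) := by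
  refine hs.eq_of_hasDerivAt_eq_zero (g := fun z => log (1 + α' z ^ 2) - Φ (α z))
    (fun z hz => ?_) hx hy
  have hq : 1 + α' z ^ 2 ≠ 0 := by positivity
  have hlog : HasDerivAt (fun z => log (1 + α' z ^ 2))
      (2 * α' z * (α'' z / (1 + α' z ^ 2))) z := by
    refine ((((hd2 z hz).fun_pow 2).const_add 1).log hq).congr_deriv ?_
    push_cast
    ring
  exact (hlog.sub ((hΦ z hz).comp z (hd1 z hz))).congr_deriv (by rw [hode z hz]; ring)

theorem hasDerivAt_sum_log_one_sub_mul {ι : Type*} [Fintype ι] (lam : ι → ℝ) {y : ℝ}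
    (hy : ∀ i, 1 - lam i * y ≠ 0) :
    HasDerivAt (fun y => ∑ i, log (1 - lam i * y)) (∑ i, -lam i / (1 - lam i * y)) y := by
  refine HasDerivAt.fun_sum fun i _ => ?_
  exact ((((hasDerivAt_id y).const_mul (lam i)).const_sub 1).log (hy i)).congr_deriv
    (by simp [neg_div])

theorem prod_rpow_eq_exp_mul_sum_log {ι : Type*} [Fintype ι] {c : ι → ℝ} (hc : ∀ i, 0 < c i)
    (p : ℝ) : ∏ i, c i ^ p = exp (p * ∑ i, log (c i)) := by
  rw [Finset.mul_sum, exp_sum]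
  exact Finset.prod_congr rfl fun i _ => by rw [rpow_def_of_pos (hc i), mul_comm]

theorem stmt_3_general (n : ℕ) (lam : Fin (n - 1) → ℝ)
    (R : ℝ → ℝ) (hR : ∀ y, R y = -(1 / 3) * ∑ i : Fin (n - 1), lam i / (1 - lam i * y))
    (s : Set ℝ) (hsconv : Convex ℝ s) (h0s : (0 : ℝ) ∈ s)
    (α α' α'' : ℝ → ℝ)
    (hd1 : ∀ x ∈ s, HasDerivAt α (α' x) x)
    (hd2 : ∀ x ∈ s, HasDerivAt α' (α'' x) x)
    (hode : ∀ x ∈ s, α'' x / (1 + (α' x) ^ 2) = R (α x))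
    (hpos : ∀ x ∈ s, ∀ i : Fin (n - 1), 0 < 1 - lam i * α x)
    (hα0 : α 0 = 0) (hα'0 : α' 0 = 0) :
    ∀ x ∈ s, 1 + (α' x) ^ 2 = ∏ i : Fin (n - 1), (1 - lam i * α x) ^ ((2 : ℝ) / 3) := by
  intro x hx
  set Φ : ℝ → ℝ := fun y => 2 / 3 * ∑ i, log (1 - lam i * y)
  have hΦ : ∀ z ∈ s, HasDerivAt Φ (2 * R (α z)) (α z) := fun z hz => by
    refine ((hasDerivAt_sum_log_one_sub_mul lam fun i => (hpos z hz i).ne').const_mul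
      (2 / 3)).congr_deriv ?_
    rw [hR, Finset.mul_sum, Finset.mul_sum, Finset.mul_sum]
    exact Finset.sum_congr rfl fun i _ => by ring
  have hfirst := log_one_add_sq_sub_eq_of_ode hsconv hd1 hd2 hode hΦ h0s hx
  simp only [Φ, hα0, hα'0] at hfirst
  norm_num at hfirst
  rw [prod_rpow_eq_exp_mul_sum_log (hpos x hx), ← sub_eq_zero.mp hfirst,
    exp_log (by positivity)]

/-- First integral of the profile-curve ODE: if α''/(1+α'²) = R(α) with
R(y) = −(1/3) Σᵢ λᵢ/(1−λᵢy) and α(0) = α'(0) = 0, then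
1 + α'² = ∏ᵢ (1 − λᵢ α)^{2/3} wherever the solution exists with 1 − λᵢ α > 0. -/
theorem stmt_3 (n : ℕ) (hn : 2 ≤ n) (lam : Fin (n - 1) → ℝ)
    (hsum : ∑ i, lam i ≠ 0)
    (R : ℝ → ℝ) (hR : ∀ y, R y = -(1 / 3) * ∑ i : Fin (n - 1), lam i / (1 - lam i * y))
    (s : Set ℝ) (hs : IsOpen s) (hsconv : Convex ℝ s) (h0s : (0 : ℝ) ∈ s)
    (α α' α'' : ℝ → ℝ)
    (hd1 : ∀ x ∈ s, HasDerivAt α (α' x) x)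
    (hd2 : ∀ x ∈ s, HasDerivAt α' (α'' x) x)
    (hode : ∀ x ∈ s, α'' x / (1 + (α' x) ^ 2) = R (α x))
    (hpos : ∀ x ∈ s, ∀ i : Fin (n - 1), 0 < 1 - lam i * α x)
    (hα0 : α 0 = 0) (hα'0 : α' 0 = 0) :
    ∀ x ∈ s, 1 + (α' x) ^ 2 = ∏ i : Fin (n - 1), (1 - lam i * α x) ^ ((2 : ℝ) / 3) :=
  stmt_3_general n lam R hR s hsconv h0s α α' α'' hd1 hd2 hode hpos hα0 hα'0
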